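/- For every integer h ≥ 1, the undirected optical index of the complete binary tree of height h is at least 5·2^{2h−2} − 3·2^h + 1. -/

import Mathlib

open SimpleGraph

/-- An all-to-all routing in a simple graph `G`: a choice of one path between each
(unordered) pair of vertices. -/
structure Routing {V : Type*} (G : SimpleGraph V) where
  path : ∀ u v : V, G.Walk u v
  isPath : ∀ u v : V, (path u v).IsPath
  symm : ∀ u v : V, path v u = (path u v).reverse

/-- The conflict graph of a routing: vertices are unordered pairs of distinct vertices of `G`
(i.e. the paths of the routing), two of them adjacent iff the corresponding paths share an
edge. -/
def Routing.conflictGraph {V : Type*} {G : SimpleGraph V} (R : Routing G) :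
    SimpleGraph {p : Sym2 V // ¬ p.IsDiag} where
  Adj p q := p ≠ q ∧ ∃ (u v u' v' : V) (e : Sym2 V),
      (p : Sym2 V) = s(u, v) ∧ (q : Sym2 V) = s(u', v') ∧
      e ∈ (R.path u v).edges ∧ e ∈ (R.path u' v').edges
  symm := ⟨by
    rintro p q ⟨hne, u, v, u', v', e, hp, hq, h1, h2⟩
    exact ⟨hne.symm, u', v', u, v, e, hq, hp, h2, h1⟩⟩
  loopless := ⟨by
    rintro p ⟨hne, -⟩
    exact hne rfl⟩

/-- The undirected optical index `w(G)`: the minimum over all all-to-all routings `R`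
of the chromatic number of the conflict graph `Q(R)`. -/
noncomputable def opticalIndex {V : Type*} (G : SimpleGraph V) : ℕ :=
  sInf {n | ∃ R : Routing G, R.conflictGraph.Colorable n}

/-- The load of an edge `e` under a routing: the number of paths of the routing
containing `e`. -/
noncomputable def Routing.load {V : Type*} {G : SimpleGraph V} (R : Routing G)
    (e : Sym2 V) : ℕ :=
  Nat.card {p : {p : Sym2 V // ¬ p.IsDiag} //
    ∃ u v : V, (p : Sym2 V) = s(u, v) ∧ e ∈ (R.path u v).edges}

/-- The edge-forwarding index `π(G)`: the minimum over all all-to-all routings of the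
maximum edge load. -/
noncomputable def forwardingIndex {V : Type*} (G : SimpleGraph V) : ℕ :=
  sInf {n | ∃ R : Routing G, ∀ e ∈ G.edgeSet, R.load e ≤ n}

/-- The complete `m`-ary tree of height `h`: vertices are words over `Fin m` of length
at most `h` (the root is the empty word), a vertex being adjacent to its parent. -/
def completeMAryTree (m h : ℕ) : SimpleGraph {l : List (Fin m) // l.length ≤ h} where
  Adj x y := (∃ a : Fin m, x.val = a :: y.val) ∨ (∃ a : Fin m, y.val = a :: x.val)
  symm := ⟨fun x y hxy => Or.symm hxy⟩
  loopless := ⟨by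
    rintro x (⟨a, ha⟩ | ⟨a, ha⟩) <;> exact List.cons_ne_self a x.val ha.symm⟩

/-- The tree `D_{m,h}`: two disjoint copies of the complete `m`-ary tree of height `h-1`
with an edge joining the two roots. -/
def doubleMAryTree (m h : ℕ) :
    SimpleGraph (Bool × {l : List (Fin m) // l.length ≤ h - 1}) where
  Adj x y := (x.1 = y.1 ∧ ((∃ a : Fin m, x.2.val = a :: y.2.val) ∨
      (∃ a : Fin m, y.2.val = a :: x.2.val)))
    ∨ (x.1 ≠ y.1 ∧ x.2.val = [] ∧ y.2.val = [])
  symm := ⟨by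
    rintro x y (⟨hb, hxy⟩ | ⟨hb, h1, h2⟩)
    · exact Or.inl ⟨hb.symm, Or.symm hxy⟩
    · exact Or.inr ⟨hb.symm, h2, h1⟩⟩
  loopless := ⟨by
    rintro x (⟨-, (⟨a, ha⟩ | ⟨a, ha⟩)⟩ | ⟨hb, -⟩)
    · exact List.cons_ne_self a _ ha.symm
    · exact List.cons_ne_self a _ ha.symm
    · exact hb rfl⟩

/-!
The vertex `[0]` of the complete binary tree has degree three, so every path through it uses two
of its three edges and any two such paths conflict: in every routing they form a clique of the
conflict graph. With `B = 2 ^ (h - 1)`, the three components of the tree minus `[0]` have `B - 1`,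
`B - 1` and `2 B` vertices, so there are `(B - 1)² + 2 (B - 1) · 2 B = 5 B² - 6 B + 1` such paths.
-/

/-- Orienting each pair by a well-order makes the choice of paths symmetric. -/
theorem Routing.nonempty_of_connected {V : Type*} {G : SimpleGraph V} (hG : G.Connected) :
    Nonempty (Routing G) := by
  classical
  let : LinearOrder V := linearOrderOfSTO WellOrderingRel
  choose P hP using hG.preconnected.exists_isPath
  refine ⟨⟨fun u v => if u ≤ v then P u v else (P v u).reverse, fun u v => ?_, fun u v => ?_⟩⟩
  · split_ifs
    exacts [hP u v, (hP v u).reverse]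
  · rcases lt_trichotomy u v with huv | rfl | huv
    · simp [huv.le, huv.not_ge]
    · simp [(Walk.isPath_iff_nil.mp (hP u u)).eq_nil]
    · simp [huv.le, huv.not_ge]

theorem card_le_opticalIndex {V : Type*} [Finite V] {G : SimpleGraph V} (hG : G.Connected)
    {ι : Type*} (f : ι → {p : Sym2 V // ¬ p.IsDiag})
    (hf : ∀ R : Routing G, Pairwise fun i j => R.conflictGraph.Adj (f i) (f j)) :
    Nat.card ι ≤ opticalIndex G := by
  classical
  have := Fintype.ofFinite V
  obtain ⟨R⟩ := Routing.nonempty_of_connected hG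
  refine le_csInf ⟨_, R, colorable_of_fintype _⟩ ?_
  rintro n ⟨R, hR⟩
  exact hR.card_le_of_pairwise_adj f (hf R)

abbrev TreeVertex (m h : ℕ) := {l : List (Fin m) // l.length ≤ h}

namespace TreeVertex

variable {m : ℕ}

def succEquiv (k : ℕ) : TreeVertex m (k + 1) ≃ Option (Fin m × TreeVertex m k) where
  toFun
    | ⟨[], _⟩ => none
    | ⟨c :: t, hl⟩ => some (c, ⟨t, Nat.le_of_succ_le_succ hl⟩)
  invFun
    | none => ⟨[], Nat.zero_le _⟩
    | some (c, t) => ⟨c :: t.val, Nat.succ_le_succ t.2⟩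
  left_inv := by rintro ⟨_ | ⟨c, t⟩, hl⟩ <;> rfl
  right_inv := by rintro (_ | ⟨c, t⟩) <;> rfl

instance instFintype : (h : ℕ) → Fintype (TreeVertex m h)
  | 0 => ⟨{⟨[], le_rfl⟩}, by rintro ⟨_ | _, hl⟩ <;> simp at hl ⊢⟩
  | k + 1 => letI := instFintype k; Fintype.ofEquiv _ (succEquiv k).symm

theorem card_succ (k : ℕ) :
    Fintype.card (TreeVertex m (k + 1)) = m * Fintype.card (TreeVertex m k) + 1 := by
  rw [Fintype.card_congr (succEquiv k), Fintype.card_option, Fintype.card_prod, Fintype.card_fin]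

theorem card_binary_add_one (k : ℕ) : Fintype.card (TreeVertex 2 k) + 1 = 2 ^ (k + 1) := by
  induction k with
  | zero => rfl
  | succ k ih => rw [card_succ, pow_succ]; omega

end TreeVertex

namespace completeMAryTree

variable {m h : ℕ}

def root : TreeVertex m h := ⟨[], Nat.zero_le h⟩

theorem reachable_root (u : TreeVertex m h) : (completeMAryTree m h).Reachable u root := by
  obtain ⟨l, hl⟩ := u
  induction l with
  | nil => rfl
  | cons c t ih =>
    have ht : t.length ≤ h := (Nat.le_succ _).trans hl
    have hadj : (completeMAryTree m h).Adj ⟨c :: t, hl⟩ ⟨t, ht⟩ := .inl ⟨c, rfl⟩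
    exact hadj.reachable.trans (ih ht)

theorem connected : (completeMAryTree m h).Connected :=
  { preconnected u v := (reachable_root u).trans (reachable_root v).symm
    nonempty := ⟨root⟩ }

def parentEdge (s : List (Fin m)) (hs : s.length ≤ h) : Sym2 (TreeVertex m h) :=
  s(⟨s, hs⟩, ⟨s.tail, by rw [List.length_tail]; omega⟩)

theorem parentEdge_mem_edges {s : List (Fin m)} (hs : s.length ≤ h) {u v : TreeVertex m h}
    (W : (completeMAryTree m h).Walk u v) (hu : s <:+ u.val) (hv : ¬ s <:+ v.val) :
    parentEdge s hs ∈ W.edges := by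
  induction W with
  | nil => exact absurd hu hv
  | @cons a b c hab W ih =>
    rw [Walk.edges_cons, List.mem_cons]
    by_cases hb : s <:+ b.val
    · exact .inr (ih hb hv)
    · left
      rcases hab with ⟨x, hx⟩ | ⟨x, hx⟩
      · rw [hx] at hu
        obtain rfl | hsb := List.suffix_cons_iff.mp hu
        · exact Sym2.eq_iff.mpr (.inl ⟨Subtype.ext hx.symm, rfl⟩)
        · exact absurd hsb hb
      · exact absurd (hx ▸ hu.trans (List.suffix_cons x a.val)) hb

theorem parentEdge_mem_edges' {s : List (Fin m)} (hs : s.length ≤ h) {u v : TreeVertex m h}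
    (W : (completeMAryTree m h).Walk u v) (hu : ¬ s <:+ u.val) (hv : s <:+ v.val) :
    parentEdge s hs ∈ W.edges := by
  simpa using parentEdge_mem_edges hs W.reverse hv hu

variable {k : ℕ}

/- A word is read from right to left: its last letter is the first step down from the root. So the
subtree at a vertex `s` consists of the words with suffix `s`, and `[c, 0]` is the `c`-th child
of `[0]`. -/
def subtreeVertex (c : Fin 2) (x : TreeVertex 2 k) : TreeVertex 2 (k + 2) :=
  ⟨x.val ++ [c, 0], by simp [x.2]⟩

def outerVertex : Option (TreeVertex 2 (k + 1)) → TreeVertex 2 (k + 2)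
  | none => root
  | some x => ⟨x.val ++ [1], by simp [x.2]⟩

theorem suffix_subtreeVertex (c : Fin 2) (x : TreeVertex 2 k) :
    [c, 0] <:+ (subtreeVertex c x).val :=
  List.suffix_append _ _

theorem zero_suffix_subtreeVertex (c : Fin 2) (x : TreeVertex 2 k) :
    [0] <:+ (subtreeVertex c x).val :=
  (List.suffix_cons c [0]).trans (suffix_subtreeVertex c x)

theorem not_suffix_subtreeVertex {c c' : Fin 2} (hc : c ≠ c') (x : TreeVertex 2 k) :
    ¬ [c', 0] <:+ (subtreeVertex c x).val := by
  rintro ⟨w, hw⟩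
  have := (List.append_inj' hw rfl).2
  simp only [List.cons.injEq, and_true] at this
  exact hc this.symm

theorem not_zero_suffix_outerVertex (o : Option (TreeVertex 2 (k + 1))) :
    ¬ [0] <:+ (outerVertex o).val := by
  rcases o with _ | x
  · simp [outerVertex, root]
  · rintro ⟨w, hw⟩
    simpa using (List.append_inj' hw rfl).2

theorem not_suffix_outerVertex (c : Fin 2) (o : Option (TreeVertex 2 (k + 1))) :
    ¬ [c, 0] <:+ (outerVertex o).val :=
  fun h => not_zero_suffix_outerVertex o ((List.suffix_cons c [0]).trans h)

@[simp]
theorem subtreeVertex_inj {c c' : Fin 2} {x x' : TreeVertex 2 k} :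
    subtreeVertex c x = subtreeVertex c' x' ↔ c = c' ∧ x = x' := by
  refine ⟨fun h => ?_, by rintro ⟨rfl, rfl⟩; rfl⟩
  obtain ⟨hx, hc⟩ := List.append_inj' (congrArg Subtype.val h) rfl
  exact ⟨by simpa using hc, Subtype.ext hx⟩

@[simp]
theorem outerVertex_inj {o o' : Option (TreeVertex 2 (k + 1))} :
    outerVertex o = outerVertex o' ↔ o = o' := by
  refine ⟨fun h => ?_, congrArg _⟩
  rcases o with _ | x <;> rcases o' with _ | x' <;>
    simp_all [outerVertex, root, Subtype.ext_iff]

@[simp]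
theorem subtreeVertex_ne_outerVertex (c : Fin 2) (x : TreeVertex 2 k)
    (o : Option (TreeVertex 2 (k + 1))) : subtreeVertex c x ≠ outerVertex o :=
  fun h => not_zero_suffix_outerVertex o (h ▸ zero_suffix_subtreeVertex c x)

@[simp]
theorem outerVertex_ne_subtreeVertex (c : Fin 2) (x : TreeVertex 2 k)
    (o : Option (TreeVertex 2 (k + 1))) : outerVertex o ≠ subtreeVertex c x :=
  (subtreeVertex_ne_outerVertex c x o).symm

/-- The paths through the vertex `[0]`, by their ends: one in each subtree below `[0]`, or one in
the subtree at `[c, 0]` and one outside the subtree at `[0]`. Each uses two of the three edges at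
`[0]`, so any two of them share an edge. -/
abbrev ThroughPair (k : ℕ) :=
  (TreeVertex 2 k × TreeVertex 2 k) ⊕ (Fin 2 × TreeVertex 2 k × Option (TreeVertex 2 (k + 1)))

def throughPath : ThroughPair k → {p : Sym2 (TreeVertex 2 (k + 2)) // ¬ p.IsDiag}
  | .inl (x, y) => ⟨s(subtreeVertex 0 x, subtreeVertex 1 y), by simp⟩
  | .inr (c, x, o) => ⟨s(subtreeVertex c x, outerVertex o), by simp⟩

theorem throughPath_injective : Function.Injective (throughPath (k := k)) := by
  rintro (⟨x, y⟩ | ⟨c, x, o⟩) (⟨x', y'⟩ | ⟨c', x', o'⟩) h <;>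
    simp [throughPath] at h ⊢ <;> tauto

theorem card_throughPair (k : ℕ) :
    Fintype.card (ThroughPair k) = 5 * 2 ^ (2 * k + 2) - 3 * 2 ^ (k + 2) + 1 := by
  simp only [Fintype.card_sum, Fintype.card_prod, Fintype.card_option, Fintype.card_fin,
    TreeVertex.card_succ]
  have hc := TreeVertex.card_binary_add_one k
  generalize Fintype.card (TreeVertex 2 k) = c at hc ⊢
  have hc1 : 1 ≤ c := by have := Nat.one_lt_two_pow (n := k + 1) (by omega); omega
  have h2k : 2 ^ (2 * k + 2) = (c + 1) ^ 2 := by rw [hc, ← pow_mul]; ring_nf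
  have hk2 : 2 ^ (k + 2) = 2 * (c + 1) := by rw [hc, pow_succ]; ring
  rw [h2k, hk2]
  ring_nf
  omega

section

variable (R : Routing (completeMAryTree 2 (k + 2)))

theorem parentEdge_mem_path_subtreeVertex_subtreeVertex (c : Fin 2) (x y : TreeVertex 2 k) :
    parentEdge [c, 0] (by simp) ∈ (R.path (subtreeVertex 0 x) (subtreeVertex 1 y)).edges := by
  fin_cases c
  · exact parentEdge_mem_edges _ _ (suffix_subtreeVertex 0 x)
      (not_suffix_subtreeVertex (by decide) y)
  · exact parentEdge_mem_edges' _ _ (not_suffix_subtreeVertex (by decide) x)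
      (suffix_subtreeVertex 1 y)

theorem parentEdge_mem_path_subtreeVertex_outerVertex (c : Fin 2) (x : TreeVertex 2 k)
    (o : Option (TreeVertex 2 (k + 1))) :
    parentEdge [c, 0] (by simp) ∈ (R.path (subtreeVertex c x) (outerVertex o)).edges :=
  parentEdge_mem_edges _ _ (suffix_subtreeVertex c x) (not_suffix_outerVertex c o)

theorem parentEdge_zero_mem_path_subtreeVertex_outerVertex (c : Fin 2) (x : TreeVertex 2 k)
    (o : Option (TreeVertex 2 (k + 1))) :
    parentEdge [0] (by simp) ∈ (R.path (subtreeVertex c x) (outerVertex o)).edges :=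
  parentEdge_mem_edges _ _ (zero_suffix_subtreeVertex c x) (not_zero_suffix_outerVertex o)

theorem throughPath_pairwise_adj :
    Pairwise fun a b => R.conflictGraph.Adj (throughPath a) (throughPath b) := by
  intro a b hab
  refine ⟨throughPath_injective.ne hab, ?_⟩
  rcases a with ⟨x, y⟩ | ⟨c, x, o⟩ <;> rcases b with ⟨x', y'⟩ | ⟨c', x', o'⟩
  · exact ⟨_, _, _, _, _, rfl, rfl, parentEdge_mem_path_subtreeVertex_subtreeVertex R 0 x y,
      parentEdge_mem_path_subtreeVertex_subtreeVertex R 0 x' y'⟩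
  · exact ⟨_, _, _, _, _, rfl, rfl, parentEdge_mem_path_subtreeVertex_subtreeVertex R c' x y,
      parentEdge_mem_path_subtreeVertex_outerVertex R c' x' o'⟩
  · exact ⟨_, _, _, _, _, rfl, rfl, parentEdge_mem_path_subtreeVertex_outerVertex R c x o,
      parentEdge_mem_path_subtreeVertex_subtreeVertex R c x' y'⟩
  · exact ⟨_, _, _, _, _, rfl, rfl, parentEdge_zero_mem_path_subtreeVertex_outerVertex R c x o,
      parentEdge_zero_mem_path_subtreeVertex_outerVertex R c' x' o'⟩

end

end completeMAryTree

open completeMAryTree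

/-- for every integer `h ≥ 1`, the undirected optical index of the complete
binary tree of height `h` is at least `5·2^(2h−2) − 3·2^h + 1`. -/
theorem opticalIndex_binaryTree_lower (h : ℕ) (hh : 1 ≤ h) :
    5 * 2 ^ (2 * h - 2) - 3 * 2 ^ h + 1 ≤ opticalIndex (completeMAryTree 2 h) := by
  obtain rfl | ⟨k, rfl⟩ : h = 1 ∨ ∃ k, h = k + 2 := by
    rcases h with _ | _ | k
    exacts [absurd hh (by decide), .inl rfl, .inr ⟨k, rfl⟩]
  -- for `h = 1` the truncated subtraction makes the bound `1`
  · have rootEdge : {p : Sym2 (TreeVertex 2 1) // ¬ p.IsDiag} :=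
      ⟨s(root, ⟨[0], le_rfl⟩), by simp [root]⟩
    simpa using card_le_opticalIndex connected (fun _ : Unit => rootEdge)
      fun _ => Subsingleton.pairwise
  · calc 5 * 2 ^ (2 * (k + 2) - 2) - 3 * 2 ^ (k + 2) + 1
        = Nat.card (ThroughPair k) := by
          rw [Nat.card_eq_fintype_card, card_throughPair,
            show 2 * (k + 2) - 2 = 2 * k + 2 by omega]
      _ ≤ _ := card_le_opticalIndex connected throughPath throughPath_pairwise_adj
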